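/- If w is a saturated set of DPL formulas, then the set f_c(w) := {φ : ◯φ ∈ w} is also saturated. -/
import Mathlib


open MeasureTheory
open scoped ENNReal

/-- Formulas of dynamic probability logic. -/
inductive DPLF : Type
  | var : ℕ → DPLF
  | neg : DPLF → DPLF
  | conj : DPLF → DPLF → DPLF
  | prob : ℚ → DPLF → DPLF
  | next : DPLF → DPLF
deriving DecidableEq

namespace DPLF

def falsum : DPLF := (var 0).conj (var 0).neg
def impl (φ ψ : DPLF) : DPLF := (φ.conj ψ.neg).neg
def disj (φ ψ : DPLF) : DPLF := (φ.neg.conj ψ.neg).neg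
def iffF (φ ψ : DPLF) : DPLF := (φ.impl ψ).conj (ψ.impl φ)

/-- n-fold application of the next operator. -/
def nextn : ℕ → DPLF → DPLF
  | 0, φ => φ
  | n+1, φ => (nextn n φ).next

/-- Iterated probability operators `L_{r₁ … r_k}`. -/
def probs : List ℚ → DPLF → DPLF
  | [], φ => φ
  | r :: rs, φ => prob r (probs rs φ)

/-- Propositional tautology: true under every Boolean valuation respecting ¬ and ∧. -/
def IsTautology (φ : DPLF) : Prop :=
  ∀ v : DPLF → Bool, (∀ ψ, v ψ.neg = !v ψ) →
    (∀ ψ χ, v (ψ.conj χ) = (v ψ && v χ)) → v φ = true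

/-- Theoremhood in the Hilbert system `H⁻_DPL`. -/
inductive Hm : DPLF → Prop
  | taut {φ : DPLF} : IsTautology φ → Hm φ
  | fa1 : Hm (prob 0 falsum)
  | fa2 {φ : DPLF} {r s : ℚ} : 0 ≤ r → r ≤ 1 → 0 ≤ s → s ≤ 1 → 1 < r + s →
      Hm (impl (prob r φ.neg) (prob s φ).neg)
  | fa3 {φ ψ : DPLF} {r s : ℚ} : 0 ≤ r → 0 ≤ s → r + s ≤ 1 →
      Hm (impl ((prob r (φ.conj ψ)).conj (prob s (φ.conj ψ.neg))) (prob (r+s) φ))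
  | fa4 {φ ψ : DPLF} {r s : ℚ} : 0 ≤ r → 0 ≤ s → r + s ≤ 1 →
      Hm (impl ((prob r (φ.conj ψ)).neg.conj (prob s (φ.conj ψ.neg)).neg) (prob (r+s) φ).neg)
  | mono {φ ψ : DPLF} {r : ℚ} : 0 ≤ r → r ≤ 1 →
      Hm (impl (prob 1 (impl φ ψ)) (impl (prob r φ) (prob r ψ)))
  | func {φ : DPLF} : Hm (iffF φ.neg.next φ.next.neg)
  | conjNext {φ ψ : DPLF} : Hm (iffF (φ.conj ψ).next (φ.next.conj ψ.next))
  | mp {φ ψ : DPLF} : Hm (impl φ ψ) → Hm φ → Hm ψ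
  | arch {φ ψ : DPLF} {n : ℕ} {r : ℚ} : 0 ≤ r → r ≤ 1 →
      (∀ s : ℚ, 0 ≤ s → s < r → Hm (impl ψ (nextn n (prob s φ)))) →
      Hm (impl ψ (nextn n (prob r φ)))
  | necL {φ : DPLF} : Hm φ → Hm (prob 1 φ)
  | necNext {φ : DPLF} : Hm φ → Hm φ.next

/-- Theoremhood in the Hilbert system `H_DPL` (with the generalized Archimedean rule). -/
inductive Hg : DPLF → Prop
  | taut {φ : DPLF} : IsTautology φ → Hg φ
  | fa1 : Hg (prob 0 falsum)
  | fa2 {φ : DPLF} {r s : ℚ} : 0 ≤ r → r ≤ 1 → 0 ≤ s → s ≤ 1 → 1 < r + s →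
      Hg (impl (prob r φ.neg) (prob s φ).neg)
  | fa3 {φ ψ : DPLF} {r s : ℚ} : 0 ≤ r → 0 ≤ s → r + s ≤ 1 →
      Hg (impl ((prob r (φ.conj ψ)).conj (prob s (φ.conj ψ.neg))) (prob (r+s) φ))
  | fa4 {φ ψ : DPLF} {r s : ℚ} : 0 ≤ r → 0 ≤ s → r + s ≤ 1 →
      Hg (impl ((prob r (φ.conj ψ)).neg.conj (prob s (φ.conj ψ.neg)).neg) (prob (r+s) φ).neg)
  | mono {φ ψ : DPLF} {r : ℚ} : 0 ≤ r → r ≤ 1 →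
      Hg (impl (prob 1 (impl φ ψ)) (impl (prob r φ) (prob r ψ)))
  | func {φ : DPLF} : Hg (iffF φ.neg.next φ.next.neg)
  | conjNext {φ ψ : DPLF} : Hg (iffF (φ.conj ψ).next (φ.next.conj ψ.next))
  | mp {φ ψ : DPLF} : Hg (impl φ ψ) → Hg φ → Hg ψ
  | garch {φ ψ : DPLF} {n : ℕ} {rs : List ℚ} {r : ℚ} : 0 ≤ r → r ≤ 1 →
      (∀ q ∈ rs, 0 ≤ q ∧ q ≤ 1) →
      (∀ s : ℚ, 0 ≤ s → s < r → Hg (impl ψ (nextn n (probs rs (prob s φ))))) →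
      Hg (impl ψ (nextn n (probs rs (prob r φ))))
  | necL {φ : DPLF} : Hg φ → Hg (prob 1 φ)
  | necNext {φ : DPLF} : Hg φ → Hg φ.next

/-- Derivability from assumptions in `H⁻_DPL` (no necessitation on assumptions). -/
inductive HmFrom (Γ : Set DPLF) : DPLF → Prop
  | assum {φ : DPLF} : φ ∈ Γ → HmFrom Γ φ
  | thm {φ : DPLF} : Hm φ → HmFrom Γ φ
  | mp {φ ψ : DPLF} : HmFrom Γ (impl φ ψ) → HmFrom Γ φ → HmFrom Γ ψ
  | arch {φ ψ : DPLF} {n : ℕ} {r : ℚ} : 0 ≤ r → r ≤ 1 →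
      (∀ s : ℚ, 0 ≤ s → s < r → HmFrom Γ (impl ψ (nextn n (prob s φ)))) →
      HmFrom Γ (impl ψ (nextn n (prob r φ)))

/-- Derivability from assumptions in `H_DPL` (no necessitation on assumptions). -/
inductive HgFrom (Γ : Set DPLF) : DPLF → Prop
  | assum {φ : DPLF} : φ ∈ Γ → HgFrom Γ φ
  | thm {φ : DPLF} : Hg φ → HgFrom Γ φ
  | mp {φ ψ : DPLF} : HgFrom Γ (impl φ ψ) → HgFrom Γ φ → HgFrom Γ ψ
  | garch {φ ψ : DPLF} {n : ℕ} {rs : List ℚ} {r : ℚ} : 0 ≤ r → r ≤ 1 →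
      (∀ q ∈ rs, 0 ≤ q ∧ q ≤ 1) →
      (∀ s : ℚ, 0 ≤ s → s < r → HgFrom Γ (impl ψ (nextn n (probs rs (prob s φ))))) →
      HgFrom Γ (impl ψ (nextn n (probs rs (prob r φ))))

/-- Consistency of a set of formulas in `H_DPL`. -/
def GConsistent (Γ : Set DPLF) : Prop := ¬ HgFrom Γ falsum

/-- Consistency of a set of formulas in `H⁻_DPL`. -/
def MConsistent (Γ : Set DPLF) : Prop := ¬ HmFrom Γ falsum

/-- Saturated sets of formulas. -/
structure Saturated (w : Set DPLF) : Prop where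
  fincon : ∀ Γ : Set DPLF, Γ ⊆ w → Γ.Finite → GConsistent Γ
  negcomplete : ∀ φ : DPLF, φ ∈ w ∨ φ.neg ∈ w
  archProp : ∀ (φ : DPLF) (n : ℕ) (rs : List ℚ) (r : ℚ), 0 ≤ r → r ≤ 1 →
    (∀ q ∈ rs, 0 ≤ q ∧ q ≤ 1) →
    (∀ s : ℚ, 0 ≤ s → s < r → nextn n (probs rs (prob s φ)) ∈ w) →
    nextn n (probs rs (prob r φ)) ∈ w

/-- The canonical space: all saturated sets. -/
def Omegac : Type := {w : Set DPLF // Saturated w}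

/-- The basic set `[φ]` of saturated sets containing `φ`. -/
def box (φ : DPLF) : Set Omegac := {w | φ ∈ w.1}

/-- The canonical base `B_c`. -/
def Bc : Set (Set Omegac) := {A | ∃ φ : DPLF, A = box φ}

/-- Dynamic Markov model. -/
structure DMM where
  World : Type
  σ : MeasurableSpace World
  T : World → @Measure World σ
  T_prob : ∀ w, IsProbabilityMeasure (T w)
  T_meas : ∀ A : Set World, MeasurableSet[σ] A →
    @Measurable World ℝ≥0∞ σ _ (fun w => T w A)
  f : World → World
  f_meas : @Measurable World World σ σ f
  v : ℕ → Set World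
  v_meas : ∀ p : ℕ, MeasurableSet[σ] (v p)

/-- Satisfaction in a dynamic Markov model. -/
def Sat (M : DMM) : DPLF → M.World → Prop
  | var p, w => w ∈ M.v p
  | neg φ, w => ¬ Sat M φ w
  | conj φ ψ, w => Sat M φ w ∧ Sat M ψ w
  | prob r φ, w => ENNReal.ofReal (r : ℝ) ≤ M.T w {u | Sat M φ u}
  | next φ, w => Sat M φ (M.f w)

end DPLF

namespace DPLFAux
open DPLF

lemma taut_fwd (X1 X2 X3 X4 X5 : DPLF) :
    IsTautology (impl (iffF X1 X2.neg) (impl (iffF X2 (X3.conj X4)) (impl (iffF X4 X5.neg)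
      (X1.impl (X3.impl X5))))) := by
  intro v hn hc
  simp only [DPLF.impl, DPLF.iffF, hn, hc]
  cases v X1 <;> cases v X2 <;> cases v X3 <;> cases v X4 <;> cases v X5 <;> rfl

lemma taut_bwd (X1 X2 X3 X4 X5 : DPLF) :
    IsTautology (impl (iffF X1 X2.neg) (impl (iffF X2 (X3.conj X4)) (impl (iffF X4 X5.neg)
      ((X3.impl X5).impl X1)))) := by
  intro v hn hc
  simp only [DPLF.impl, DPLF.iffF, hn, hc]
  cases v X1 <;> cases v X2 <;> cases v X3 <;> cases v X4 <;> cases v X5 <;> rfl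

lemma taut_fals (Y1 Y2 Y3 Z : DPLF) :
    IsTautology (impl (iffF Y1 (Y2.conj Y3)) (impl (iffF Y3 Y2.neg) (Y1.impl Z))) := by
  intro v hn hc
  simp only [DPLF.impl, DPLF.iffF, hn, hc]
  cases v Y1 <;> cases v Y2 <;> cases v Y3 <;> cases v Z <;> rfl

lemma taut_iff_right (a b : DPLF) : IsTautology (impl (iffF a b) (b.impl a)) := by
  intro v hn hc
  simp only [DPLF.impl, DPLF.iffF, hn, hc]
  cases v a <;> cases v b <;> rfl

lemma taut_exf (a : DPLF) : IsTautology (impl a (impl a.neg falsum)) := by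
  intro v hn hc
  simp only [DPLF.impl, DPLF.falsum, hn, hc]
  cases v a <;> cases v (var 0) <;> rfl

lemma hg_next_impl_fwd (φ ψ : DPLF) :
    Hg (impl (impl φ ψ).next (impl φ.next ψ.next)) :=
  ((Hg.taut (taut_fwd ((φ.conj ψ.neg).neg.next) ((φ.conj ψ.neg).next) φ.next (ψ.neg.next)
      ψ.next)).mp Hg.func).mp Hg.conjNext |>.mp Hg.func

lemma hg_next_impl_bwd (φ ψ : DPLF) :
    Hg (impl (impl φ.next ψ.next) (impl φ ψ).next) :=
  ((Hg.taut (taut_bwd ((φ.conj ψ.neg).neg.next) ((φ.conj ψ.neg).next) φ.next (ψ.neg.next)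
      ψ.next)).mp Hg.func).mp Hg.conjNext |>.mp Hg.func

lemma hg_fals_next : Hg (impl falsum.next falsum) :=
  ((Hg.taut (taut_fals (falsum.next) ((var 0).next) ((var 0).neg.next) falsum)).mp
      Hg.conjNext).mp Hg.func

lemma hgfrom_next {Γ : Set DPLF} {φ : DPLF} (h : HgFrom Γ φ) :
    HgFrom (DPLF.next '' Γ) φ.next := by
  induction h with
  | assum h => exact .assum ⟨_, h, rfl⟩
  | thm h => exact .thm h.necNext
  | mp h1 h2 ih1 ih2 => exact (HgFrom.mp (.thm (hg_next_impl_fwd _ _)) ih1).mp ih2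
  | @garch φ ψ n rs r hr0 hr1 hq h ih =>
      refine HgFrom.mp (.thm (hg_next_impl_bwd _ _)) ?_
      exact HgFrom.garch (n := n + 1) hr0 hr1 hq
        (fun s h0 h1 => HgFrom.mp (.thm (hg_next_impl_fwd _ _)) (ih s h0 h1))

/-- deductive closure of saturated sets under provable implication -/
lemma sat_closed {w : Set DPLF} (hw : Saturated w) {ψ χ : DPLF}
    (hψ : ψ ∈ w) (h : Hg (impl ψ χ)) : χ ∈ w := by
  rcases hw.negcomplete χ with hχ | hχ
  · exact hχ
  · exfalso
    have hsub : {ψ, χ.neg} ⊆ w := by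
      intro x hx; rcases hx with rfl | hx
      · exact hψ
      · simp only [Set.mem_singleton_iff] at hx; subst hx; exact hχ
    refine hw.fincon {ψ, χ.neg} hsub ((Set.finite_singleton _).insert _) ?_
    have hχ' : HgFrom {ψ, χ.neg} χ := .mp (.thm h) (.assum (by simp))
    exact (HgFrom.mp (.thm (Hg.taut (taut_exf χ))) hχ').mp (.assum (by simp))

end DPLFAux

open DPLF DPLFAux in
/-- if w is saturated then f_c(w) = {φ : ◯φ ∈ w} is saturated. -/
theorem stmt5 (w : Set DPLF) (hw : Saturated w) :
    Saturated {φ : DPLF | φ.next ∈ w} := by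
  constructor
  · intro Γ hΓ hfin hcon
    refine hw.fincon (DPLF.next '' Γ) ?_ (hfin.image _) ?_
    · rintro _ ⟨φ, hφ, rfl⟩; exact hΓ hφ
    · exact HgFrom.mp (.thm hg_fals_next) (hgfrom_next hcon)
  · intro φ
    rcases hw.negcomplete φ.next with h | h
    · exact Or.inl h
    · right
      exact sat_closed hw h ((Hg.taut (taut_iff_right φ.neg.next φ.next.neg)).mp Hg.func)
  · intro φ n rs r hr0 hr1 hrs hs
    exact hw.archProp φ (n + 1) rs r hr0 hr1 hrs (fun s h0 h1 => hs s h0 h1)
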